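/- arXiv:0907.5338 — 3 statements merged into one kernel-verified Lean document; each statement's English description precedes it below -/
import Mathlib

section
/- Let f : (0,∞) → (0,∞) be operator monotone. Then the function h(t) = (t−1)²/f(t), defined for t > 0, is operator convex. -/
open Matrix Kronecker ComplexOrder

/-- Functional calculus: apply `g : ℝ → ℝ` to a Hermitian matrix via its spectral
decomposition (junk value `0` on non-Hermitian matrices). -/
noncomputable def matFun {ι : Type} [Fintype ι] [DecidableEq ι] (g : ℝ → ℝ)
    (M : Matrix ι ι ℂ) : Matrix ι ι ℂ :=
  if hM : M.IsHermitian then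
    ∑ i, (g (hM.eigenvalues i) : ℂ) •
      Matrix.vecMulVec (⇑(hM.eigenvectorBasis i)) (star ⇑(hM.eigenvectorBasis i))
  else 0

/-- Operator monotonicity on `(0,∞)`: monotone w.r.t. the Loewner order on positive
definite complex Hermitian matrices of all sizes. -/
def OperatorMonotone (g : ℝ → ℝ) : Prop :=
  ∀ (k : ℕ) (A B : Matrix (Fin k) (Fin k) ℂ), A.PosDef → B.PosDef →
    (B - A).PosSemidef → (matFun g B - matFun g A).PosSemidef

/-- Operator convexity on `(0,∞)` for positive definite complex Hermitian matrices
of all sizes. -/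
def OperatorConvex (g : ℝ → ℝ) : Prop :=
  ∀ (k : ℕ) (A B : Matrix (Fin k) (Fin k) ℂ), A.PosDef → B.PosDef →
    ∀ t : ℝ, 0 ≤ t → t ≤ 1 →
      (t • matFun g A + (1 - t) • matFun g B - matFun g (t • A + (1 - t) • B)).PosSemidef

/-!
Since `(t - 1)² / f t = (t - 1) (f t)⁻¹ (t - 1)`, the matrix `h A` is the Schur complement making
`[[f A, A - 1], [A - 1, h A]]` positive semidefinite. Convex combinations of such block matrices
stay positive, so `(F, X) ↦ Xᴴ F⁻¹ X` is jointly convex and antitone in `F`, and it remains to show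
that `f` is operator concave. This is the Hansen–Pedersen argument: conjugating `diag(A, B)` by a
block rotation puts `tA + (1 - t)B` in the corner, and for `ε > 0` the rotated matrix lies below
`diag(tA + (1 - t)B + ε, ·)`, so operator monotonicity gives concavity up to `ε`. Letting `ε → 0`
needs right-continuity of `f`, which follows from its monotonicity and the scalar case of the
`ε`-concavity.
-/

open Filter Topology Unitary
open scoped MatrixOrder

variable {ι κ : Type}

namespace Matrix

lemma PosDef.convexComb {A B : Matrix ι ι ℂ} (hA : A.PosDef) (hB : B.PosDef) {t : ℝ}
    (ht₀ : 0 ≤ t) (ht₁ : t ≤ 1) : (t • A + (1 - t) • B).PosDef := by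
  rcases ht₁.lt_or_eq with ht₁ | rfl
  · exact PosDef.posSemidef_add (hA.posSemidef.smul ht₀) (hB.smul (sub_pos.mpr ht₁))
  · simpa using hA

lemma le_of_fromBlocks_le_fromBlocks {A A' : Matrix ι ι ℂ} {B B' : Matrix ι κ ℂ}
    {C C' : Matrix κ ι ℂ} {D D' : Matrix κ κ ℂ}
    (h : fromBlocks A B C D ≤ fromBlocks A' B' C' D') : A ≤ A' := by
  rw [le_iff]
  convert (le_iff.mp h).submatrix Sum.inl using 1
  ext i j
  simp

variable [Fintype ι] [DecidableEq ι]

lemma fromBlocks_le_fromBlocks_add_smul_one {C D E : Matrix ι ι ℂ} (hD : D.IsHermitian)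
    {ε : ℝ} (hε : 0 < ε) :
    fromBlocks C D D E ≤ fromBlocks (C + ε • 1) 0 0 (E + ε⁻¹ • (D * D)) := by
  set γ := √ε
  have hγ : γ ≠ 0 := (Real.sqrt_pos.mpr hε).ne'
  have hγε : γ * γ = ε := Real.mul_self_sqrt hε.le
  set S := fromCols (γ • (1 : Matrix ι ι ℂ)) (-(γ⁻¹ • D))
  suffices h : fromBlocks (C + ε • 1) 0 0 (E + ε⁻¹ • (D * D)) - fromBlocks C D D E = Sᴴ * S by
    rw [le_iff, h]
    exact posSemidef_conjTranspose_mul_self S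
  rw [conjTranspose_fromCols_eq_fromRows_conjTranspose, fromRows_mul_fromCols, sub_eq_add_neg,
    fromBlocks_neg, fromBlocks_add]
  simp only [conjTranspose_smul, conjTranspose_neg, conjTranspose_one, hD.eq, star_trivial,
    Matrix.smul_mul, Matrix.mul_smul, Matrix.neg_mul, Matrix.mul_neg, Matrix.one_mul,
    Matrix.mul_one, smul_neg, neg_neg, smul_smul, ← mul_inv, hγε, mul_inv_cancel₀ hγ,
    inv_mul_cancel₀ hγ, one_smul]
  congr 1 <;> abel

-- The operator-norm C⋆-algebra structure makes the Loewner order closed.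
open scoped Matrix.Norms.L2Operator in
lemma le_of_forall_pos_le_add_smul_one {M K : Matrix ι ι ℂ}
    (h : ∀ η : ℝ, 0 < η → M ≤ K + η • 1) : M ≤ K := by
  refine ge_of_tendsto (x := 𝓝[>] (0 : ℝ)) ?_ (eventually_nhdsWithin_of_forall h)
  have : Continuous fun η : ℝ => K + η • (1 : Matrix ι ι ℂ) := by fun_prop
  simpa using this.continuousWithinAt.tendsto (x := 0) (s := Set.Ioi 0)

variable [Fintype κ]

lemma PosSemidef.fromBlocks_zero_zero {A : Matrix ι ι ℂ} (hA : A.PosSemidef) :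
    (fromBlocks A 0 0 (0 : Matrix κ κ ℂ)).PosSemidef := by
  rw [← fromCols_fromRows_eq_fromBlocks, fromRows_zero]
  simpa [conjTranspose_fromCols_eq_fromRows_conjTranspose, fromRows_mul, mul_fromCols] using
    hA.conjTranspose_mul_mul_same (fromCols (1 : Matrix ι ι ℂ) (0 : Matrix ι κ ℂ))

lemma posSemidef_fromBlocks_iff {F : Matrix ι ι ℂ} (hF : F.PosDef) (X : Matrix ι κ ℂ)
    (W : Matrix κ κ ℂ) : (fromBlocks F X Xᴴ W).PosSemidef ↔ Xᴴ * F⁻¹ * X ≤ W := by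
  let := hF.isUnit.invertible
  exact hF.fromBlocks₁₁ X W

lemma conjTranspose_mul_inv_mul_le {F₁ F₂ G : Matrix ι ι ℂ} {X₁ X₂ : Matrix ι κ ℂ}
    (hF₁ : F₁.PosDef) (hF₂ : F₂.PosDef) {t : ℝ} (ht₀ : 0 ≤ t) (ht₁ : t ≤ 1)
    (hG : t • F₁ + (1 - t) • F₂ ≤ G) :
    (t • X₁ + (1 - t) • X₂)ᴴ * G⁻¹ * (t • X₁ + (1 - t) • X₂) ≤
      t • (X₁ᴴ * F₁⁻¹ * X₁) + (1 - t) • (X₂ᴴ * F₂⁻¹ * X₂) := by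
  have hG' : G.PosDef := by
    simpa using (hF₁.convexComb hF₂ ht₀ ht₁).add_posSemidef (le_iff.mp hG)
  have h₁ := (posSemidef_fromBlocks_iff hF₁ X₁ _).mpr le_rfl
  have h₂ := (posSemidef_fromBlocks_iff hF₂ X₂ _).mpr le_rfl
  have h₃ := (le_iff.mp hG).fromBlocks_zero_zero (κ := κ)
  rw [← posSemidef_fromBlocks_iff hG']
  convert ((h₁.smul ht₀).add (h₂.smul (sub_nonneg.mpr ht₁))).add h₃ using 1
  simp only [fromBlocks_smul, fromBlocks_add, conjTranspose_add, conjTranspose_smul, star_trivial]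
  congr 1 <;> abel

variable [DecidableEq κ]

lemma PosDef.fromBlocks_zero {A : Matrix ι ι ℂ} {B : Matrix κ κ ℂ} (hA : A.PosDef)
    (hB : B.PosDef) : (fromBlocks A 0 0 B).PosDef := by
  let := hA.isUnit.invertible
  have hAB := (hA.fromBlocks₁₁ 0 B).mpr (by simpa using hB.posSemidef)
  rw [conjTranspose_zero] at hAB
  exact hAB.posDef_iff_isUnit.mpr (isUnit_fromBlocks_zero₂₁.mpr ⟨hA.isUnit, hB.isUnit⟩)

end Matrix

variable [Fintype ι] [DecidableEq ι] [Fintype κ] [DecidableEq κ]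

lemma Matrix.IsHermitian.cfc_eq_eigenvectorUnitary_mul (g : ℝ → ℝ) {M : Matrix ι ι ℂ}
    (hM : M.IsHermitian) :
    cfc g M = (hM.eigenvectorUnitary : Matrix ι ι ℂ) *
      diagonal (Complex.ofReal ∘ g ∘ hM.eigenvalues) *
        star (hM.eigenvectorUnitary : Matrix ι ι ℂ) := by
  rw [hM.cfc_eq, IsHermitian.cfc, conjStarAlgAut_apply]
  rfl

lemma matFun_eq_cfc (g : ℝ → ℝ) {M : Matrix ι ι ℂ} (hM : M.IsHermitian) :
    matFun g M = cfc g M := by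
  ext a b
  rw [matFun, dif_pos hM, hM.cfc_eq_eigenvectorUnitary_mul, Matrix.mul_apply]
  simp only [mul_diagonal, Matrix.sum_apply, Matrix.smul_apply, vecMulVec_apply, star_apply,
    IsHermitian.eigenvectorUnitary_apply, smul_eq_mul, Pi.star_apply, Function.comp_apply]
  exact Finset.sum_congr rfl fun i _ => by ring

lemma diagonal_comp_mul_eq_mul_diagonal_comp {μ : ι → ℝ} {ν : κ → ℝ} {K : Matrix ι κ ℂ}
    (h : diagonal (Complex.ofReal ∘ μ) * K = K * diagonal (Complex.ofReal ∘ ν)) (g : ℝ → ℝ) :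
    diagonal (Complex.ofReal ∘ g ∘ μ) * K = K * diagonal (Complex.ofReal ∘ g ∘ ν) := by
  ext i j
  have hij := congrFun₂ h i j
  simp only [diagonal_mul, mul_diagonal, Function.comp_apply] at hij ⊢
  by_cases hK : K i j = 0
  · simp [hK]
  · have : μ i = ν j := Complex.ofReal_injective (mul_left_cancel₀ hK (by linear_combination hij))
    rw [this, mul_comm]

lemma unitary_conj_diagonal_comp_intertwines {U : Matrix ι ι ℂ} {V : Matrix κ κ ℂ}
    (hU : U ∈ unitary (Matrix ι ι ℂ)) (hV : V ∈ unitary (Matrix κ κ ℂ)) {μ : ι → ℝ}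
    {ν : κ → ℝ} {J : Matrix ι κ ℂ}
    (h : U * diagonal (Complex.ofReal ∘ μ) * star U * J =
      J * (V * diagonal (Complex.ofReal ∘ ν) * star V))
    (g : ℝ → ℝ) :
    U * diagonal (Complex.ofReal ∘ g ∘ μ) * star U * J =
      J * (V * diagonal (Complex.ofReal ∘ g ∘ ν) * star V) := by
  have hU₁ {l : Type} (M : Matrix ι l ℂ) : star U * (U * M) = M := by
    rw [← Matrix.mul_assoc, star_mul_self_of_mem hU, Matrix.one_mul]
  have hU₂ {l : Type} (M : Matrix ι l ℂ) : U * (star U * M) = M := by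
    rw [← Matrix.mul_assoc, mul_star_self_of_mem hU, Matrix.one_mul]
  have hV₁ {l : Type} (M : Matrix κ l ℂ) : star V * (V * M) = M := by
    rw [← Matrix.mul_assoc, star_mul_self_of_mem hV, Matrix.one_mul]
  set K := star U * J * V with hK
  have hJ : J = U * K * star V := by
    rw [hK, Matrix.mul_assoc, Matrix.mul_assoc, mul_star_self_of_mem hV, Matrix.mul_one, hU₂]
  have hKμν : diagonal (Complex.ofReal ∘ μ) * K = K * diagonal (Complex.ofReal ∘ ν) :=
    calc diagonal (Complex.ofReal ∘ μ) * K
        = star U * (U * diagonal (Complex.ofReal ∘ μ) * star U * J) * V := by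
          simp only [hK, Matrix.mul_assoc, hU₁]
      _ = K * diagonal (Complex.ofReal ∘ ν) := by
          rw [h]; simp only [hK, Matrix.mul_assoc, star_mul_self_of_mem hV, Matrix.mul_one]
  calc U * diagonal (Complex.ofReal ∘ g ∘ μ) * star U * J
      = U * (diagonal (Complex.ofReal ∘ g ∘ μ) * K) * star V := by
        rw [hJ]; simp only [Matrix.mul_assoc, hU₁]
    _ = J * (V * diagonal (Complex.ofReal ∘ g ∘ ν) * star V) := by
        rw [diagonal_comp_mul_eq_mul_diagonal_comp hKμν g, hJ]
        simp only [Matrix.mul_assoc, hV₁]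

lemma cfc_mul_eq_mul_cfc_of_mul_eq_mul {X : Matrix ι ι ℂ} {P : Matrix κ κ ℂ}
    (hX : X.IsHermitian) (hP : P.IsHermitian) {J : Matrix ι κ ℂ} (hJ : X * J = J * P)
    (g : ℝ → ℝ) : cfc g X * J = J * cfc g P := by
  rw [← cfc_id ℝ X, ← cfc_id ℝ P, hX.cfc_eq_eigenvectorUnitary_mul,
    hP.cfc_eq_eigenvectorUnitary_mul] at hJ
  rw [hX.cfc_eq_eigenvectorUnitary_mul, hP.cfc_eq_eigenvectorUnitary_mul]
  exact unitary_conj_diagonal_comp_intertwines (SetLike.coe_mem _) (SetLike.coe_mem _) hJ g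

lemma cfc_fromBlocks_zero {P : Matrix ι ι ℂ} {Q : Matrix κ κ ℂ} (hP : P.IsHermitian)
    (hQ : Q.IsHermitian) (g : ℝ → ℝ) :
    cfc g (fromBlocks P 0 0 Q) = fromBlocks (cfc g P) 0 0 (cfc g Q) := by
  have hPQ : (fromBlocks P 0 0 Q).IsHermitian := hP.fromBlocks (by simp) hQ
  have h₁ := cfc_mul_eq_mul_cfc_of_mul_eq_mul hPQ hP (J := fromRows 1 0)
    (by simp [fromBlocks_mul_fromRows, fromRows_mul]) g
  have h₂ := cfc_mul_eq_mul_cfc_of_mul_eq_mul hPQ hQ (J := fromRows 0 1)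
    (by simp [fromBlocks_mul_fromRows, fromRows_mul]) g
  calc cfc g (fromBlocks P 0 0 Q)
      = cfc g (fromBlocks P 0 0 Q) * fromCols (fromRows 1 0) (fromRows 0 1) := by
        rw [fromCols_fromRows_eq_fromBlocks, fromBlocks_one, Matrix.mul_one]
    _ = fromBlocks (cfc g P) 0 0 (cfc g Q) := by
        rw [mul_fromCols, h₁, h₂, fromRows_mul, fromRows_mul, fromCols_fromRows_eq_fromBlocks]
        simp

lemma cfc_star_mul_mul {U X : Matrix ι ι ℂ} (hU : U ∈ unitary (Matrix ι ι ℂ))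
    (hX : X.IsHermitian) (g : ℝ → ℝ) : cfc g (star U * X * U) = star U * cfc g X * U := by
  have hUXU : (star U * X * U).IsHermitian := by
    simpa [star_eq_conjTranspose, Matrix.mul_assoc] using isHermitian_conjTranspose_mul_mul U hX
  have h := cfc_mul_eq_mul_cfc_of_mul_eq_mul hUXU hX (J := star U)
    (by simp [Matrix.mul_assoc, mul_star_self_of_mem hU]) g
  rw [← h, Matrix.mul_assoc _ (star U) U, star_mul_self_of_mem hU, Matrix.mul_one]

lemma cfc_submatrix_equiv {X : Matrix ι ι ℂ} (hX : X.IsHermitian) (e : κ ≃ ι) (g : ℝ → ℝ) :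
    cfc g (X.submatrix e e) = (cfc g X).submatrix e e := by
  set J : Matrix ι κ ℂ := (1 : Matrix ι ι ℂ).submatrix id e
  have hJ (M : Matrix ι ι ℂ) : M * J = M.submatrix id e := by
    ext a k
    simp [J, Matrix.mul_apply, Matrix.one_apply]
  have hJ' (M : Matrix κ κ ℂ) : J * M = M.submatrix e.symm id := by
    ext a k
    simp [J, Matrix.mul_apply, Matrix.one_apply, ← Equiv.symm_apply_eq]
  have h := cfc_mul_eq_mul_cfc_of_mul_eq_mul hX (hX.submatrix e) (J := J)
    (by rw [hJ, hJ']; ext; simp) g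
  rw [hJ, hJ'] at h
  simpa using (congrArg (fun M => M.submatrix e id) h).symm

lemma cfc_posDef_of_pos {f : ℝ → ℝ} (hf : ∀ t > 0, 0 < f t) {A : Matrix ι ι ℂ}
    (hA : A.PosDef) : (cfc f A).PosDef :=
  ((cfc_isStrictlyPositive_iff f A (finite_real_spectrum.continuousOn _)).mpr fun x hx =>
    hf x (hA.isStrictlyPositive.spectrum_pos hx)).posDef

lemma cfc_sq_sub_one_div_eq {f : ℝ → ℝ} (hf : ∀ t > 0, 0 < f t) {A : Matrix ι ι ℂ}
    (hA : A.PosDef) :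
    cfc (fun t => (t - 1) ^ 2 / f t) A = (A - 1)ᴴ * (cfc f A)⁻¹ * (A - 1) := by
  have hspec := finite_real_spectrum (A := A)
  have hf₀ (x : ℝ) (hx : x ∈ spectrum ℝ A) : f x ≠ 0 :=
    (hf x (hA.isStrictlyPositive.spectrum_pos hx)).ne'
  have hsub : cfc (fun t : ℝ => t - 1) A = A - 1 := by
    rw [cfc_sub (fun t => t) (fun _ => 1) A, cfc_id' ℝ A, cfc_const_one ℝ A]
  calc cfc (fun t => (t - 1) ^ 2 / f t) A
      = cfc (fun t => (t - 1) * (f t)⁻¹ * (t - 1)) A :=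
        cfc_congr fun x _ => by rw [div_eq_mul_inv]; ring
    _ = cfc (fun t : ℝ => t - 1) A * cfc (fun t => (f t)⁻¹) A * cfc (fun t : ℝ => t - 1) A := by
        rw [cfc_mul _ _ A (hspec.continuousOn _) (hspec.continuousOn _),
          cfc_mul _ _ A (hspec.continuousOn _) (hspec.continuousOn _)]
    _ = (A - 1)ᴴ * (cfc f A)⁻¹ * (A - 1) := by
        rw [hsub, cfc_inv f A hf₀ (hspec.continuousOn _), ← nonsing_inv_eq_ringInverse,
          (hA.1.sub isHermitian_one).eq]

noncomputable def blockRotation (ι : Type) [DecidableEq ι] (a b : ℝ) :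
    Matrix (ι ⊕ ι) (ι ⊕ ι) ℂ :=
  fromBlocks (a • 1) (-(b • 1)) (b • 1) (a • 1)

lemma star_blockRotation_mul_fromBlocks_mul (a b : ℝ) (P Q : Matrix ι ι ℂ) :
    star (blockRotation ι a b) * fromBlocks P 0 0 Q * blockRotation ι a b =
      fromBlocks ((a * a) • P + (b * b) • Q) ((a * b) • (Q - P))
        ((a * b) • (Q - P)) ((b * b) • P + (a * a) • Q) := by
  simp only [blockRotation, star_eq_conjTranspose, fromBlocks_conjTranspose, conjTranspose_smul,
    conjTranspose_neg, conjTranspose_one, star_trivial, fromBlocks_multiply, Matrix.smul_mul,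
    Matrix.mul_smul, Matrix.one_mul, Matrix.mul_one, Matrix.mul_zero, add_zero, zero_add,
    Matrix.neg_mul, Matrix.mul_neg, smul_smul]
  congr 1 <;> module

lemma blockRotation_mem_unitary {a b : ℝ} (hab : a ^ 2 + b ^ 2 = 1) :
    blockRotation ι a b ∈ unitary (Matrix (ι ⊕ ι) (ι ⊕ ι) ℂ) := by
  have h : star (blockRotation ι a b) * blockRotation ι a b = 1 := by
    have := star_blockRotation_mul_fromBlocks_mul (ι := ι) a b 1 1
    rw [fromBlocks_one, Matrix.mul_one] at this
    rw [this, ← add_smul, ← add_smul, sub_self, smul_zero, ← sq, ← sq, hab, add_comm, hab,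
      one_smul, fromBlocks_one]
  exact ⟨h, mul_eq_one_comm.mp h⟩

-- Right-continuity from a one-sided bound: with `s = 4ε / c`, the hypothesis at `c / 2` and
-- `c + ε` gives `(1 - s) (f (c + ε) - f c) ≤ s (f c - f (c / 2))`.
lemma tendsto_apply_add_nhdsGT_zero {f : ℝ → ℝ} (hmono : MonotoneOn f (Set.Ioi 0))
    (hconc : ∀ x > 0, ∀ y > 0, ∀ t ε : ℝ, 0 ≤ t → t ≤ 1 → 0 < ε →
      t * f x + (1 - t) * f y ≤ f (t * x + (1 - t) * y + ε))
    {c : ℝ} (hc : 0 < c) : Tendsto (fun ε => f (c + ε)) (𝓝[>] 0) (𝓝 (f c)) := by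
  have hlower (ε : ℝ) (hε : 0 < ε) : f c ≤ f (c + ε) :=
    hmono hc (show 0 < c + ε by positivity) (by linarith)
  have hupper (ε : ℝ) (hε : 0 < ε) (hεc : ε ≤ c / 8) :
      f (c + ε) ≤ f c + 8 * (f c - f (c / 2)) / c * ε := by
    set s := 4 * ε / c
    have hsc : s * c = 4 * ε := by simp only [s]; field_simp
    have hs₀ : 0 ≤ s := by positivity
    have hs₁ : s ≤ 1 / 2 := by rw [div_le_iff₀ hc]; linarith
    have h₁ := hconc (c / 2) (by positivity) (c + ε) (by positivity) s ε hs₀ (by linarith) hε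
    rw [show s * (c / 2) + (1 - s) * (c + ε) + ε = c - s * ε by
      linear_combination (-1 / 2) * hsc] at h₁
    have h₂ : f (c - s * ε) ≤ f c := hmono (show 0 < c - s * ε by nlinarith) hc (by nlinarith)
    have h₃ := hlower ε hε
    rw [show 8 * (f c - f (c / 2)) / c * ε = 2 * s * (f c - f (c / 2)) by
      simp only [s]; field_simp; ring]
    nlinarith
  have hlim : Tendsto (fun ε => f c + 8 * (f c - f (c / 2)) / c * ε) (𝓝[>] 0) (𝓝 (f c)) := by
    have : Continuous fun ε : ℝ => f c + 8 * (f c - f (c / 2)) / c * ε := by fun_prop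
    simpa using this.continuousWithinAt.tendsto (x := 0) (s := Set.Ioi 0)
  refine tendsto_of_tendsto_of_tendsto_of_le_of_le' tendsto_const_nhds hlim
    (eventually_nhdsWithin_of_forall hlower) ?_
  filter_upwards [Ioc_mem_nhdsGT (show (0 : ℝ) < c / 8 by positivity)] with ε hε
  exact hupper ε hε.1 hε.2

namespace OperatorMonotone

variable {f : ℝ → ℝ}

lemma cfc_le_cfc (hf : OperatorMonotone f) {A B : Matrix ι ι ℂ} (hA : A.PosDef) (hAB : A ≤ B) :
    cfc f A ≤ cfc f B := by
  have hB : B.PosDef := by simpa using hA.add_posSemidef (le_iff.mp hAB)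
  set e := (Fintype.equivFin ι).symm
  have h := hf _ (A.submatrix e e) (B.submatrix e e) (hA.submatrix e.injective)
    (hB.submatrix e.injective) ((le_iff.mp hAB).submatrix e)
  rw [matFun_eq_cfc _ (hB.1.submatrix e), matFun_eq_cfc _ (hA.1.submatrix e),
    cfc_submatrix_equiv hB.1, cfc_submatrix_equiv hA.1] at h
  exact le_iff.mpr ((posSemidef_submatrix_equiv e).mp h)

lemma monotoneOn (hf : OperatorMonotone f) : MonotoneOn f (Set.Ioi 0) := by
  intro x hx y _ hxy
  have h := hf.cfc_le_cfc (isStrictlyPositive_algebraMap hx).posDef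
    (algebraMap_le_algebraMap.mpr hxy : algebraMap ℝ (Matrix (Fin 1) (Fin 1) ℂ) x ≤ _)
  rwa [cfc_algebraMap, cfc_algebraMap, algebraMap_le_algebraMap] at h

lemma smul_cfc_add_smul_cfc_le_cfc_add_smul_one (hf : OperatorMonotone f) {A B : Matrix ι ι ℂ}
    (hA : A.PosDef) (hB : B.PosDef) {t ε : ℝ} (ht₀ : 0 ≤ t) (ht₁ : t ≤ 1) (hε : 0 < ε) :
    t • cfc f A + (1 - t) • cfc f B ≤ cfc f (t • A + (1 - t) • B + ε • 1) := by
  set a := √t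
  set b := √(1 - t)
  have ha : a * a = t := Real.mul_self_sqrt ht₀
  have hb : b * b = 1 - t := Real.mul_self_sqrt (sub_nonneg.mpr ht₁)
  have hU := blockRotation_mem_unitary (ι := ι) (a := a) (b := b) (by rw [sq, sq, ha, hb]; ring)
  set U := blockRotation ι a b
  have hX := hA.fromBlocks_zero hB
  set D := (a * b) • (B - A)
  have hD : D.IsHermitian := (hB.1.sub hA.1).smul (IsSelfAdjoint.all _)
  have hY := (IsUnit.posDef_star_left_conjugate_iff (isUnit_coe (U := ⟨U, hU⟩))).mpr hX
  have hYZ : star U * fromBlocks A 0 0 B * U ≤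
      fromBlocks (t • A + (1 - t) • B + ε • 1) 0 0 ((1 - t) • A + t • B + ε⁻¹ • (D * D)) := by
    rw [star_blockRotation_mul_fromBlocks_mul, ha, hb]
    exact fromBlocks_le_fromBlocks_add_smul_one hD hε
  obtain ⟨hZ₁, -, -, hZ₂⟩ := isHermitian_fromBlocks_iff.mp
    (by simpa using (hY.add_posSemidef (le_iff.mp hYZ)).1)
  have hmono := hf.cfc_le_cfc hY hYZ
  rw [cfc_star_mul_mul hU hX.1, cfc_fromBlocks_zero hA.1 hB.1,
    star_blockRotation_mul_fromBlocks_mul, ha, hb, cfc_fromBlocks_zero hZ₁ hZ₂] at hmono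
  exact le_of_fromBlocks_le_fromBlocks hmono

lemma mul_add_mul_le_add (hf : OperatorMonotone f) {x y t ε : ℝ} (hx : 0 < x) (hy : 0 < y)
    (ht₀ : 0 ≤ t) (ht₁ : t ≤ 1) (hε : 0 < ε) :
    t * f x + (1 - t) * f y ≤ f (t * x + (1 - t) * y + ε) := by
  have h := hf.smul_cfc_add_smul_cfc_le_cfc_add_smul_one (ι := Fin 1)
    (isStrictlyPositive_algebraMap hx).posDef (isStrictlyPositive_algebraMap hy).posDef
    ht₀ ht₁ hε
  simp only [Algebra.smul_def, mul_one, cfc_algebraMap, ← map_mul, ← map_add] at h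
  rwa [algebraMap_le_algebraMap] at h

lemma smul_cfc_add_smul_cfc_le_cfc (hf : OperatorMonotone f) {A B : Matrix ι ι ℂ}
    (hA : A.PosDef) (hB : B.PosDef) {t : ℝ} (ht₀ : 0 ≤ t) (ht₁ : t ≤ 1) :
    t • cfc f A + (1 - t) • cfc f B ≤ cfc f (t • A + (1 - t) • B) := by
  set C := t • A + (1 - t) • B
  have hC := hA.convexComb hB ht₀ ht₁
  have hspec := finite_real_spectrum (A := C)
  refine le_of_forall_pos_le_add_smul_one fun η hη => ?_
  have hev : ∀ᶠ ε in 𝓝[>] (0 : ℝ), 0 < ε ∧ ∀ x ∈ spectrum ℝ C, f (x + ε) < f x + η := by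
    refine eventually_mem_nhdsWithin.and (hspec.eventually_all.mpr fun x hx => ?_)
    exact (tendsto_apply_add_nhdsGT_zero hf.monotoneOn
      (fun x hx y hy t ε ht₀ ht₁ hε => hf.mul_add_mul_le_add hx hy ht₀ ht₁ hε)
      (hC.isStrictlyPositive.spectrum_pos hx)).eventually
      (gt_mem_nhds (lt_add_of_pos_right _ hη))
  obtain ⟨ε, hε, hεη⟩ := hev.exists
  calc t • cfc f A + (1 - t) • cfc f B
      ≤ cfc f (C + ε • 1) := hf.smul_cfc_add_smul_cfc_le_cfc_add_smul_one hA hB ht₀ ht₁ hε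
    _ = cfc (fun x => f (x + ε)) C := by
        rw [cfc_comp' f (· + ε) C ((hspec.image _).continuousOn _) (hspec.continuousOn _),
          cfc_add_const ε (fun x => x) C, cfc_id' ℝ C, Algebra.algebraMap_eq_smul_one]
    _ ≤ cfc (fun x => f x + η) C :=
        cfc_mono (fun x hx => (hεη x hx).le) (hspec.continuousOn _) (hspec.continuousOn _)
    _ = cfc f C + η • 1 := by
        rw [cfc_add_const η f C (hspec.continuousOn _), Algebra.algebraMap_eq_smul_one]

end OperatorMonotone

/-- If `f : (0,∞) → (0,∞)` is operator monotone, then `h(t) = (t-1)²/f(t)` is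
operator convex on `(0,∞)`. -/
theorem operatorConvex_sq_sub_one_div_of_operatorMonotone (f : ℝ → ℝ)
    (hf_pos : ∀ t > 0, 0 < f t) (hf_mono : OperatorMonotone f) :
    OperatorConvex (fun t => (t - 1) ^ 2 / f t) := by
  intro k A B hA hB t ht₀ ht₁
  have hC := hA.convexComb hB ht₀ ht₁
  rw [matFun_eq_cfc _ hA.1, matFun_eq_cfc _ hB.1, matFun_eq_cfc _ hC.1, ← le_iff,
    cfc_sq_sub_one_div_eq hf_pos hA, cfc_sq_sub_one_div_eq hf_pos hB,
    cfc_sq_sub_one_div_eq hf_pos hC,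
    show t • A + (1 - t) • B - 1 = t • (A - 1) + (1 - t) • (B - 1) by module]
  exact conjTranspose_mul_inv_mul_le (cfc_posDef_of_pos hf_pos hA) (cfc_posDef_of_pos hf_pos hB)
    ht₀ ht₁ (hf_mono.smul_cfc_add_smul_cfc_le_cfc hA hB ht₀ ht₁)
end

section
/- Let f ∈ F_op with Morozova-Chentsov function c, and let ρ be a semi-quantum state on ℂ^n ⊗ ℂ^m that is positive definite, with spectral decomposition ρ = Σ_k λ_k v_k v_k* (orthonormal eigenbasis (v_k), eigenvalues λ_k > 0). Then for every n×n complex Hermitian matrix A and every m×m complex Hermitian matrix B the cross term vanishes: Σ_{k,l} ĉ(λ_k, λ_l) · ⟨v_k, (A ⊗ 1₂) v_l⟩ · ⟨v_l, (1₁ ⊗ B) v_k⟩ = 0 (equivalently, Tr((A⊗1₂)·ĉ(L_ρ,R_ρ)(1₁⊗B)) = 0). -/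
open Matrix Kronecker ComplexOrder

/-- `ĉ(x,y) = (x-y)² · c(x,y)` where `c(x,y) = 1/(y·f(x/y))` is the
Morozova-Chentsov function associated with `f`. -/
noncomputable def chat (f : ℝ → ℝ) (x y : ℝ) : ℝ :=
  (x - y) ^ 2 * (1 / (y * f (x / y)))

/-- The quadratic form `Σ_{k,l} ĉ(λ_k,λ_l)·|⟨u_k, A u_l⟩|²` computed from the spectral
decomposition of the Hermitian matrix `ρ` (junk value `0` on non-Hermitian matrices). -/
noncomputable def skewSum {ι : Type} [Fintype ι] [DecidableEq ι] (f : ℝ → ℝ)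
    (ρ A : Matrix ι ι ℂ) : ℝ :=
  if hρ : ρ.IsHermitian then
    ∑ i, ∑ j, chat f (hρ.eigenvalues i) (hρ.eigenvalues j) *
      Complex.normSq (star ⇑(hρ.eigenvectorBasis i) ⬝ᵥ A *ᵥ ⇑(hρ.eigenvectorBasis j))
  else 0

/-- A bipartite state `ρ` on `ℂⁿ ⊗ ℂᵐ` is semi-quantum if `ρ = Σ_i p_i·(P_i ⊗ ρ_i)` for
mutually orthogonal rank-one projections `(P_i)` summing to the identity, a probability
distribution `(p_i)` and density matrices `ρ_i` on the second factor. -/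
def IsSemiQuantum {n m : ℕ} (ρ : Matrix (Fin n × Fin m) (Fin n × Fin m) ℂ) : Prop :=
  ∃ (P : Fin n → Matrix (Fin n) (Fin n) ℂ) (p : Fin n → ℝ)
      (σ : Fin n → Matrix (Fin m) (Fin m) ℂ),
    (∀ i, (P i).IsHermitian) ∧ (∀ i, P i * P i = P i) ∧
    (∀ i j, i ≠ j → P i * P j = 0) ∧ (∑ i, P i = 1) ∧ (∀ i, (P i).rank = 1) ∧
    (∀ i, 0 ≤ p i) ∧ (∑ i, p i = 1) ∧
    (∀ i, (σ i).PosSemidef) ∧ (∀ i, (σ i).trace = 1) ∧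
    ρ = ∑ i, (p i : ℂ) • (P i ⊗ₖ σ i)

/-!
The sum `Σ_{k,l} G(λ_k, λ_l) ⟨v_k, X v_l⟩ ⟨v_l, Y v_k⟩` does not depend on the orthonormal
eigenbasis `(v_k, λ_k)` of `ρ`: two such bases differ by a unitary `U` with
`diag λ · U = U · diag μ`, so `U p k ≠ 0` only when `λ_p = μ_k`, the weights pass through the
change of basis, and what remains is a trace, invariant under conjugation.

A semi-quantum state has an eigenbasis of product vectors `e_i ⊗ u_{i,r}`, where `P_i = e_i e_iᴴ`
and `(u_{i,r})_r` diagonalises `ρ_i`. In it the summand factors as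
`⟨e_i, A e_j⟩ ⟨u_{i,r}, u_{j,s}⟩ · ⟨e_j, e_i⟩ ⟨u_{j,s}, B u_{i,r}⟩`, which vanishes unless
`(i, r) = (j, s)`, and there `ĉ(λ, λ) = 0`.
-/

section Orthonormal

variable {ι κ : Type*} [Fintype ι]

def IsOrthonormal [DecidableEq κ] (v : κ → ι → ℂ) : Prop :=
  ∀ k l, star (v k) ⬝ᵥ v l = if k = l then 1 else 0

theorem star_transpose_of_mul_mul_apply (v : ι → ι → ℂ) (X : Matrix ι ι ℂ) (k l : ι) :
    (star (of v)ᵀ * X * (of v)ᵀ) k l = star (v k) ⬝ᵥ X *ᵥ v l :=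
  mul_mul_apply _ _ _ _ _

variable [DecidableEq ι]

theorem isOrthonormal_iff_transpose_of_mem_unitaryGroup {v : ι → ι → ℂ} :
    IsOrthonormal v ↔ (of v)ᵀ ∈ unitaryGroup ι ℂ := by
  rw [mem_unitaryGroup_iff', ← ext_iff]
  refine forall₂_congr fun k l => ?_
  simp [mul_apply, dotProduct, one_apply]

theorem sum_smul_vecMulVec_eq_mul_diagonal_mul (c : ι → ℂ) (v : ι → ι → ℂ) :
    ∑ k, c k • vecMulVec (v k) (star (v k)) = (of v)ᵀ * diagonal c * star (of v)ᵀ := by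
  ext i j
  rw [Matrix.sum_apply, mul_apply]
  refine Finset.sum_congr rfl fun k _ => ?_
  simp only [Matrix.smul_apply, vecMulVec_apply, mul_diagonal, star_apply, transpose_apply,
    of_apply, Pi.star_apply, smul_eq_mul]
  ring

theorem Matrix.IsHermitian.isOrthonormal_eigenvectorBasis {M : Matrix ι ι ℂ}
    (hM : M.IsHermitian) :
    IsOrthonormal fun a => ⇑(hM.eigenvectorBasis a) :=
  isOrthonormal_iff_transpose_of_mem_unitaryGroup.mpr hM.eigenvectorUnitary.2

theorem Matrix.IsHermitian.eq_sum_eigenvalues_smul_vecMulVec {M : Matrix ι ι ℂ}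
    (hM : M.IsHermitian) :
    M = ∑ a, (hM.eigenvalues a : ℂ) •
      vecMulVec ⇑(hM.eigenvectorBasis a) (star ⇑(hM.eigenvectorBasis a)) := by
  rw [sum_smul_vecMulVec_eq_mul_diagonal_mul]
  exact hM.spectral_theorem

end Orthonormal

section WeightedTrace

variable {ι : Type*} [Fintype ι]

def weightedTrace (G : ℝ → ℝ → ℂ) (d : ι → ℝ) (M N : Matrix ι ι ℂ) : ℂ :=
  ∑ k, ∑ l, G (d k) (d l) * M k l * N l k

theorem weightedTrace_eq_trace (G : ℝ → ℝ → ℂ) (d : ι → ℝ) (M N : Matrix ι ι ℂ) :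
    weightedTrace G d M N = trace ((of fun k l => G (d k) (d l)) ⊙ M * N) := by
  simp [weightedTrace, trace, mul_apply, hadamard]

variable [DecidableEq ι] {d d' : ι → ℝ} {U : Matrix ι ι ℂ}

theorem eq_of_diagonal_mul_eq_mul_diagonal
    (h : diagonal (fun k => (d k : ℂ)) * U = U * diagonal (fun k => (d' k : ℂ)))
    {p k : ι} (hU : U p k ≠ 0) : d p = d' k := by
  have hpk := congr_fun₂ h p k
  rw [diagonal_mul, mul_diagonal, mul_comm] at hpk
  exact_mod_cast mul_left_cancel₀ hU hpk

theorem hadamard_conj_of_diagonal_mul_eq_mul_diagonal (G : ℝ → ℝ → ℂ) (M : Matrix ι ι ℂ)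
    (h : diagonal (fun k => (d k : ℂ)) * U = U * diagonal (fun k => (d' k : ℂ))) :
    (of fun k l => G (d' k) (d' l)) ⊙ (star U * M * U) =
      star U * ((of fun p q => G (d p) (d q)) ⊙ M) * U := by
  ext k l
  simp only [hadamard_apply, of_apply, mul_mul_apply, dotProduct, mulVec, Finset.mul_sum]
  refine Finset.sum_congr rfl fun p _ => Finset.sum_congr rfl fun q _ => ?_
  by_cases hpk : U p k = 0
  · simp [hpk]
  by_cases hql : U q l = 0
  · simp [hql]
  rw [eq_of_diagonal_mul_eq_mul_diagonal h hpk, eq_of_diagonal_mul_eq_mul_diagonal h hql]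
  simp only [star_apply, transpose_apply]
  ring

theorem weightedTrace_conj (G : ℝ → ℝ → ℂ) (M N : Matrix ι ι ℂ) (hU : U ∈ unitaryGroup ι ℂ)
    (h : diagonal (fun k => (d k : ℂ)) * U = U * diagonal (fun k => (d' k : ℂ))) :
    weightedTrace G d' (star U * M * U) (star U * N * U) = weightedTrace G d M N := by
  rw [weightedTrace_eq_trace, weightedTrace_eq_trace,
    hadamard_conj_of_diagonal_mul_eq_mul_diagonal G M h]
  set K := (of fun p q => G (d p) (d q)) ⊙ M
  calc trace (star U * K * U * (star U * N * U))
      = trace (star U * (K * (U * star U) * N) * U) := by simp only [Matrix.mul_assoc]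
    _ = trace (U * star U * (K * N)) := by
      rw [trace_mul_comm, ← Matrix.mul_assoc, Unitary.mul_star_self_of_mem hU, Matrix.mul_one]
    _ = trace (K * N) := by rw [Unitary.mul_star_self_of_mem hU, Matrix.one_mul]

theorem weightedTrace_conj_eq_of_mul_diagonal_mul_eq (G : ℝ → ℝ → ℂ) (X Y : Matrix ι ι ℂ)
    {V W : Matrix ι ι ℂ} (hV : V ∈ unitaryGroup ι ℂ) (hW : W ∈ unitaryGroup ι ℂ)
    (h : V * diagonal (fun k => (d k : ℂ)) * star V = W * diagonal (fun k => (d' k : ℂ)) * star W) :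
    weightedTrace G d (star V * X * V) (star V * Y * V) =
      weightedTrace G d' (star W * X * W) (star W * Y * W) := by
  have hW_eq : W = V * (star V * W) := by
    rw [← Matrix.mul_assoc, Unitary.mul_star_self_of_mem hV, Matrix.one_mul]
  have hintertwine : diagonal (fun k => (d k : ℂ)) * (star V * W) =
      star V * W * diagonal (fun k => (d' k : ℂ)) := by
    calc diagonal (fun k => (d k : ℂ)) * (star V * W)
        = star V * (V * diagonal (fun k => (d k : ℂ)) * star V) * W := by
          simp only [← Matrix.mul_assoc, Unitary.star_mul_self_of_mem hV, Matrix.one_mul]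
      _ = star V * W * diagonal (fun k => (d' k : ℂ)) := by
          rw [h]
          simp only [Matrix.mul_assoc, Unitary.star_mul_self_of_mem hW, Matrix.mul_one]
  have hconj (Z : Matrix ι ι ℂ) :
      star W * Z * W = star (star V * W) * (star V * Z * V) * (star V * W) := by
    conv_lhs => rw [hW_eq]
    simp only [star_mul, Matrix.mul_assoc]
  rw [hconj X, hconj Y, weightedTrace_conj G _ _ (mul_mem (Unitary.star_mem hV) hW) hintertwine]

end WeightedTrace

section RankOne

variable {ι : Type*} [Fintype ι]

theorem vecMulVec_star_mulVec (e x : ι → ℂ) : vecMulVec e (star e) *ᵥ x = (star e ⬝ᵥ x) • e := by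
  ext i
  simp [vecMulVec_mulVec, mul_comm]

theorem dotProduct_eq_zero_of_vecMulVec_mul_vecMulVec_eq_zero {e g : ι → ℂ}
    (he : star e ⬝ᵥ e = 1) (hg : star g ⬝ᵥ g = 1)
    (h : vecMulVec e (star e) * vecMulVec g (star g) = 0) : star e ⬝ᵥ g = 0 := by
  have := congrArg (fun M => star e ⬝ᵥ M *ᵥ g) h
  simpa [← mulVec_mulVec, vecMulVec_star_mulVec, hg, he] using this

variable [DecidableEq ι]

theorem Matrix.IsHermitian.exists_eq_vecMulVec_of_rank_eq_one {P : Matrix ι ι ℂ}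
    (hP : P.IsHermitian) (hidem : IsIdempotentElem P) (hrank : P.rank = 1) :
    ∃ e : ι → ℂ, star e ⬝ᵥ e = 1 ∧ P = vecMulVec e (star e) := by
  have hspec (a : ι) : hP.eigenvalues a = 0 ∨ hP.eigenvalues a = 1 := by
    simpa using hidem.spectrum_subset ℝ (hP.eigenvalues_mem_spectrum_real a)
  obtain ⟨⟨a₀, ha₀⟩, huniq⟩ :=
    Fintype.card_eq_one_iff.mp (hP.rank_eq_card_non_zero_eigs ▸ hrank)
  have hzero (a : ι) (ha : a ≠ a₀) : hP.eigenvalues a = 0 := by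
    by_contra h
    exact ha (congrArg Subtype.val (huniq ⟨a, h⟩))
  refine ⟨hP.eigenvectorBasis a₀, by simpa using hP.isOrthonormal_eigenvectorBasis a₀ a₀, ?_⟩
  refine hP.eq_sum_eigenvalues_smul_vecMulVec.trans ?_
  rw [Finset.sum_eq_single a₀ (fun a _ ha => by simp [hzero a ha]) (by simp),
    (hspec a₀).resolve_left ha₀]
  simp

end RankOne

section KroneckerVector

variable {α β : Type*}

def kronVec (x : α → ℂ) (y : β → ℂ) : α × β → ℂ := fun q => x q.1 * y q.2

theorem star_kronVec (x : α → ℂ) (y : β → ℂ) : star (kronVec x y) = kronVec (star x) (star y) :=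
  funext fun _ => star_mul' _ _

theorem vecMulVec_kronecker_vecMulVec (x x' : α → ℂ) (y y' : β → ℂ) :
    vecMulVec x x' ⊗ₖ vecMulVec y y' = vecMulVec (kronVec x y) (kronVec x' y') := by
  ext ⟨a, b⟩ ⟨c, d⟩
  simp only [kronecker_apply, vecMulVec_apply, kronVec]
  ring

theorem Matrix.kronecker_sum {R κ l m n p : Type*} [CommSemiring R] (s : Finset κ)
    (A : Matrix l m R) (B : κ → Matrix n p R) : A ⊗ₖ ∑ k ∈ s, B k = ∑ k ∈ s, A ⊗ₖ B k :=
  map_sum (kroneckerBilinear (R := R) A) B s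

variable [Fintype α] [Fintype β]

theorem kronVec_dotProduct_kronVec (x x' : α → ℂ) (y y' : β → ℂ) :
    kronVec x y ⬝ᵥ kronVec x' y' = (x ⬝ᵥ x') * (y ⬝ᵥ y') := by
  simp only [dotProduct, kronVec, Fintype.sum_prod_type, Finset.sum_mul_sum]
  exact Finset.sum_congr rfl fun a _ => Finset.sum_congr rfl fun b _ => by ring

theorem kronecker_mulVec_kronVec (A : Matrix α α ℂ) (B : Matrix β β ℂ) (x : α → ℂ) (y : β → ℂ) :
    (A ⊗ₖ B) *ᵥ kronVec x y = kronVec (A *ᵥ x) (B *ᵥ y) := by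
  ext ⟨a, b⟩
  exact kronVec_dotProduct_kronVec (A a) x (B b) y

theorem IsOrthonormal.kronVec {κ μ : Type*} [DecidableEq κ] [DecidableEq μ] {e : κ → α → ℂ}
    {u : κ → μ → β → ℂ} (he : IsOrthonormal e) (hu : ∀ i, IsOrthonormal (u i)) :
    IsOrthonormal fun k : κ × μ => kronVec (e k.1) (u k.1 k.2) := by
  rintro ⟨i, r⟩ ⟨j, s⟩
  rw [star_kronVec, kronVec_dotProduct_kronVec, he]
  obtain rfl | hij := eq_or_ne i j
  · simp [hu i r s, Prod.ext_iff]
  · simp [hij]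

theorem dotProduct_kronecker_one_mul_dotProduct_one_kronecker_eq_zero {κ μ : Type*}
    [DecidableEq κ] [DecidableEq μ] [DecidableEq α] [DecidableEq β] {e : κ → α → ℂ}
    {u : κ → μ → β → ℂ} (he : IsOrthonormal e) (hu : ∀ i, IsOrthonormal (u i))
    (A : Matrix α α ℂ) (B : Matrix β β ℂ) {k l : κ × μ} (hkl : k ≠ l) :
    (star (kronVec (e k.1) (u k.1 k.2)) ⬝ᵥ (A ⊗ₖ (1 : Matrix β β ℂ)) *ᵥ
        kronVec (e l.1) (u l.1 l.2)) *
      (star (kronVec (e l.1) (u l.1 l.2)) ⬝ᵥ ((1 : Matrix α α ℂ) ⊗ₖ B) *ᵥ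
        kronVec (e k.1) (u k.1 k.2)) = 0 := by
  obtain ⟨i, r⟩ := k
  obtain ⟨j, s⟩ := l
  simp only [star_kronVec, kronecker_mulVec_kronVec, kronVec_dotProduct_kronVec, one_mulVec]
  obtain rfl | hij := eq_or_ne i j
  · rw [hu i r s, if_neg (by rintro rfl; exact hkl rfl), mul_zero, zero_mul]
  · rw [he j i, if_neg hij.symm, zero_mul, mul_zero]

end KroneckerVector

theorem sum_sum_mul_dotProduct_eq_of_eigenbasis {ι : Type*} [Fintype ι] [DecidableEq ι]
    (G : ℝ → ℝ → ℂ) (X Y : Matrix ι ι ℂ) {v w : ι → ι → ℂ} {lam μ : ι → ℝ}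
    (hv : IsOrthonormal v) (hw : IsOrthonormal w)
    (h : ∑ k, (lam k : ℂ) • vecMulVec (v k) (star (v k)) =
      ∑ k, (μ k : ℂ) • vecMulVec (w k) (star (w k))) :
    ∑ k, ∑ l, G (lam k) (lam l) * (star (v k) ⬝ᵥ X *ᵥ v l) * (star (v l) ⬝ᵥ Y *ᵥ v k) =
      ∑ k, ∑ l, G (μ k) (μ l) * (star (w k) ⬝ᵥ X *ᵥ w l) * (star (w l) ⬝ᵥ Y *ᵥ w k) := by
  rw [sum_smul_vecMulVec_eq_mul_diagonal_mul, sum_smul_vecMulVec_eq_mul_diagonal_mul] at h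
  simpa only [weightedTrace, star_transpose_of_mul_mul_apply] using
    weightedTrace_conj_eq_of_mul_diagonal_mul_eq G X Y
      (isOrthonormal_iff_transpose_of_mem_unitaryGroup.mp hv)
      (isOrthonormal_iff_transpose_of_mem_unitaryGroup.mp hw) h

theorem IsSemiQuantum.exists_kronVec_eigenbasis {n m : ℕ}
    {ρ : Matrix (Fin n × Fin m) (Fin n × Fin m) ℂ} (h : IsSemiQuantum ρ) :
    ∃ (e : Fin n → Fin n → ℂ) (u : Fin n → Fin m → Fin m → ℂ) (μ : Fin n × Fin m → ℝ),
      IsOrthonormal e ∧ (∀ i, IsOrthonormal (u i)) ∧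
      ρ = ∑ k, (μ k : ℂ) • vecMulVec (kronVec (e k.1) (u k.1 k.2))
        (star (kronVec (e k.1) (u k.1 k.2))) := by
  obtain ⟨P, p, σ, hPh, hPidem, hPorth, -, hPrank, -, -, hσ, -, rfl⟩ := h
  choose e he hPe using fun i => (hPh i).exists_eq_vecMulVec_of_rank_eq_one (hPidem i) (hPrank i)
  have hσh (i : Fin n) : (σ i).IsHermitian := (hσ i).isHermitian
  refine ⟨e, fun i r => (hσh i).eigenvectorBasis r, fun k => p k.1 * (hσh k.1).eigenvalues k.2,
    fun i j => ?_, fun i => (hσh i).isOrthonormal_eigenvectorBasis, ?_⟩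
  · split_ifs with hij
    · exact hij ▸ he i
    · exact dotProduct_eq_zero_of_vecMulVec_mul_vecMulVec_eq_zero (he i) (he j)
        (hPe i ▸ hPe j ▸ hPorth i j hij)
  · rw [Fintype.sum_prod_type]
    refine Finset.sum_congr rfl fun i _ => ?_
    conv_lhs => rw [hPe i, (hσh i).eq_sum_eigenvalues_smul_vecMulVec]
    simp only [kronecker_sum, kronecker_smul, Finset.smul_sum, smul_smul, star_kronVec,
      vecMulVec_kronecker_vecMulVec]
    push_cast
    rfl

theorem chat_self (f : ℝ → ℝ) (x : ℝ) : chat f x x = 0 := by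
  simp [chat]

theorem crossTerm_eq_zero_of_semiQuantum_general {n m : ℕ} (f : ℝ → ℝ)
    (ρ : Matrix (Fin n × Fin m) (Fin n × Fin m) ℂ)
    (hsq : IsSemiQuantum ρ)
    (v : Fin n × Fin m → (Fin n × Fin m → ℂ)) (lam : Fin n × Fin m → ℝ)
    (horth : ∀ k l, star (v k) ⬝ᵥ v l = if k = l then 1 else 0)
    (hdecomp : ρ = ∑ k, (lam k : ℂ) • Matrix.vecMulVec (v k) (star (v k)))
    (A : Matrix (Fin n) (Fin n) ℂ)
    (B : Matrix (Fin m) (Fin m) ℂ) :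
    ∑ k, ∑ l, (chat f (lam k) (lam l) : ℂ) *
        (star (v k) ⬝ᵥ (A ⊗ₖ (1 : Matrix (Fin m) (Fin m) ℂ)) *ᵥ v l) *
        (star (v l) ⬝ᵥ ((1 : Matrix (Fin n) (Fin n) ℂ) ⊗ₖ B) *ᵥ v k) = 0 := by
  obtain ⟨e, u, μ, he, hu, hρ⟩ := hsq.exists_kronVec_eigenbasis
  refine (sum_sum_mul_dotProduct_eq_of_eigenbasis (fun x y => (chat f x y : ℂ)) _ _ horth
    (he.kronVec hu) (hdecomp ▸ hρ)).trans ?_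
  refine Finset.sum_eq_zero fun k _ => Finset.sum_eq_zero fun l _ => ?_
  obtain rfl | hkl := eq_or_ne k l
  · simp [chat_self]
  · rw [mul_assoc, dotProduct_kronecker_one_mul_dotProduct_one_kronecker_eq_zero he hu A B hkl,
      mul_zero]

/-- For `f ∈ F_op` and a positive definite semi-quantum state `ρ` with spectral
decomposition `ρ = Σ_k λ_k v_k v_k*`, the cross term vanishes:
`Σ_{k,l} ĉ(λ_k,λ_l)·⟨v_k,(A ⊗ 1₂)v_l⟩·⟨v_l,(1₁ ⊗ B)v_k⟩ = 0`. -/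
theorem crossTerm_eq_zero_of_semiQuantum {n m : ℕ} (f : ℝ → ℝ)
    (hf_mono : OperatorMonotone f) (hf_pos : ∀ t > 0, 0 < f t)
    (hf_symm : ∀ t > 0, f t = t * f (1 / t)) (hf_one : f 1 = 1)
    (ρ : Matrix (Fin n × Fin m) (Fin n × Fin m) ℂ) (hρ : ρ.PosDef) (hρtr : ρ.trace = 1)
    (hsq : IsSemiQuantum ρ)
    (v : Fin n × Fin m → (Fin n × Fin m → ℂ)) (lam : Fin n × Fin m → ℝ)
    (horth : ∀ k l, star (v k) ⬝ᵥ v l = if k = l then 1 else 0)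
    (hlam : ∀ k, 0 < lam k)
    (hdecomp : ρ = ∑ k, (lam k : ℂ) • Matrix.vecMulVec (v k) (star (v k)))
    (A : Matrix (Fin n) (Fin n) ℂ) (hA : A.IsHermitian)
    (B : Matrix (Fin m) (Fin m) ℂ) (hB : B.IsHermitian) :
    ∑ k, ∑ l, (chat f (lam k) (lam l) : ℂ) *
        (star (v k) ⬝ᵥ (A ⊗ₖ (1 : Matrix (Fin m) (Fin m) ℂ)) *ᵥ v l) *
        (star (v l) ⬝ᵥ ((1 : Matrix (Fin n) (Fin n) ℂ) ⊗ₖ B) *ᵥ v k) = 0 :=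
  crossTerm_eq_zero_of_semiQuantum_general f ρ hsq v lam horth hdecomp A B
end

section
/- For 1 < p ≤ 2 let g_p(t) = (t^p − 1)/(t − 1) + (t^{1−p} − 1)/(t − 1) for t > 0, t ≠ 1, and g_p(1) = 1. Then g_p is operator monotone on (0,∞). -/
open Matrix Kronecker ComplexOrder

/-- The function `g_p(t) = (tᵖ − 1)/(t − 1) + (t^{1−p} − 1)/(t − 1)` for `t ≠ 1`,
and `g_p(1) = 1`. -/
noncomputable def gWYD (p : ℝ) (t : ℝ) : ℝ :=
  if t = 1 then 1 else (t ^ p - 1) / (t - 1) + (t ^ (1 - p) - 1) / (t - 1)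

/-!
With `s = p - 1 ∈ (0,1)`, write `C = ∫₀^∞ l^(s-1)/(1+l) dl`. The Stieltjes representation
`∫₀^∞ l^(s-1) t/(l+t) dl = C tˢ` and partial fractions in `t` give
`g_p(t) = C⁻¹ ∫₀^∞ (l^(s-1) - W(l)/(t+l)) dl` with `W(l) = (l^(s+1) + l^(-s))/(1+l) ≥ 0`;
the point `t = 1`, and the equality of the constants for `s` and `1 - s`, come from the
substitution `l ↦ 1/l`. For `p = 2`, `g_p(t) = t + 1 - 1/t`.

Every function `β t + ∫ (a(l) - w(l)/(t+l)) dμ(l)` with `β, w ≥ 0` is operator monotone: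
`⟨x, f(A) x⟩ = ∑ᵢ |⟨vᵢ, x⟩|² f(λᵢ)` is linear in `f` and commutes with the integral, `t ↦ t`
and constants are operator monotone, and so is `t ↦ -(t+l)⁻¹` because inversion reverses the
Loewner order.
-/

open MeasureTheory Set Real

namespace Matrix

variable {n : Type} [DecidableEq n] {A B : Matrix n n ℂ}

lemma PosDef.add_smul_one (hA : A.PosDef) {l : ℝ} (hl : 0 ≤ l) : (A + (l : ℂ) • 1).PosDef :=
  hA.add_posSemidef (PosSemidef.one.smul (Complex.zero_le_real.2 hl))

variable [Fintype n]

open scoped Matrix.Norms.L2Operator MatrixOrder in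
lemma PosDef.posSemidef_inv_sub_inv (hA : A.PosDef) (hB : B.PosDef) (hAB : (B - A).PosSemidef) :
    (A⁻¹ - B⁻¹).PosSemidef := by
  simpa [le_iff] using CStarAlgebra.inv_le_inv (a := hA.isUnit.unit) (b := hB.isUnit.unit)
    (nonneg_iff_posSemidef.2 hA.posSemidef) hAB

lemma isHermitian_matFun (f : ℝ → ℝ) (M : Matrix n n ℂ) : (matFun f M).IsHermitian := by
  unfold matFun
  split_ifs with hM
  · refine (conjTranspose_sum _ _).trans (Finset.sum_congr rfl fun i _ => ?_)
    rw [conjTranspose_smul, (posSemidef_vecMulVec_self_star _).1.eq, Complex.star_def,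
      Complex.conj_ofReal]
  · exact isHermitian_zero

namespace IsHermitian

noncomputable def eigenprojection (hA : A.IsHermitian) (i : n) : Matrix n n ℂ :=
  vecMulVec ⇑(hA.eigenvectorBasis i) (star ⇑(hA.eigenvectorBasis i))

lemma matFun_eq_sum (hA : A.IsHermitian) (f : ℝ → ℝ) :
    matFun f A = ∑ i, (f (hA.eigenvalues i) : ℂ) • hA.eigenprojection i :=
  dif_pos hA

lemma sum_eigenprojection (hA : A.IsHermitian) : ∑ i, hA.eigenprojection i = 1 := by
  rw [← (mem_unitaryGroup_iff).1 hA.eigenvectorUnitary.2]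
  ext a b
  simp [eigenprojection, sum_apply, vecMulVec_apply, mul_apply, star_eq_conjTranspose,
    eigenvectorUnitary_apply]

lemma mul_eigenprojection (hA : A.IsHermitian) (i : n) :
    A * hA.eigenprojection i = (hA.eigenvalues i : ℂ) • hA.eigenprojection i := by
  rw [eigenprojection, mul_vecMulVec, hA.mulVec_eigenvectorBasis, ← smul_vecMulVec,
    Complex.coe_smul]

lemma matFun_id (hA : A.IsHermitian) : matFun id A = A := by
  rw [hA.matFun_eq_sum]
  simp_rw [id, ← mul_eigenprojection, ← Finset.mul_sum, sum_eigenprojection, mul_one]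

lemma matFun_one (hA : A.IsHermitian) : matFun 1 A = 1 := by
  simp [hA.matFun_eq_sum, sum_eigenprojection]

lemma dotProduct_eigenprojection_mulVec (hA : A.IsHermitian) (x : n → ℂ) (i : n) :
    star x ⬝ᵥ hA.eigenprojection i *ᵥ x = Complex.normSq (star ⇑(hA.eigenvectorBasis i) ⬝ᵥ x) := by
  rw [eigenprojection, dotProduct_mulVec, vecMul_vecMulVec, smul_dotProduct, smul_eq_mul,
    star_dotProduct, Complex.normSq_eq_conj_mul_self]
  rfl

/-- `∫ f dμ` for the spectral measure `μ = ∑ᵢ |⟨vᵢ, x⟩|² δ_{λᵢ}` of `A` at `x`. -/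
noncomputable def spectralSum (hA : A.IsHermitian) (x : n → ℂ) (f : ℝ → ℝ) : ℝ :=
  ∑ i, Complex.normSq (star ⇑(hA.eigenvectorBasis i) ⬝ᵥ x) * f (hA.eigenvalues i)

lemma dotProduct_matFun_mulVec (hA : A.IsHermitian) (f : ℝ → ℝ) (x : n → ℂ) :
    star x ⬝ᵥ matFun f A *ᵥ x = hA.spectralSum x f := by
  simp [hA.matFun_eq_sum, sum_mulVec, dotProduct_sum, smul_mulVec, dotProduct_smul,
    spectralSum, dotProduct_eigenprojection_mulVec, mul_comm]

lemma spectralSum_sub_div (hA : A.IsHermitian) (x : n → ℂ) (a w l : ℝ) :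
    hA.spectralSum x (fun t => a - w / (t + l))
      = a * hA.spectralSum x 1 - w * hA.spectralSum x (fun t => (t + l)⁻¹) := by
  simp only [spectralSum, Pi.one_apply, Finset.mul_sum, ← Finset.sum_sub_distrib]
  exact Finset.sum_congr rfl fun i _ => by ring

end IsHermitian

lemma PosDef.matFun_inv_add (hA : A.PosDef) {l : ℝ} (hl : 0 ≤ l) :
    matFun (fun t => (t + l)⁻¹) A = (A + (l : ℂ) • 1)⁻¹ := by
  refine (inv_eq_right_inv ?_).symm
  rw [hA.1.matFun_eq_sum, Finset.mul_sum]
  conv_rhs => rw [← hA.1.sum_eigenprojection]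
  refine Finset.sum_congr rfl fun i _ => ?_
  have hpos : hA.1.eigenvalues i + l ≠ 0 :=
    (add_pos_of_pos_of_nonneg (hA.eigenvalues_pos i) hl).ne'
  rw [mul_smul_comm, add_mul, hA.1.mul_eigenprojection, smul_one_mul, ← add_smul, smul_smul,
    ← Complex.ofReal_add, ← Complex.ofReal_mul, inv_mul_cancel₀ hpos, Complex.ofReal_one, one_smul]

lemma posSemidef_matFun_sub_matFun_iff (hA : A.IsHermitian) (hB : B.IsHermitian) (f g : ℝ → ℝ) :
    (matFun g B - matFun f A).PosSemidef ↔ ∀ x, hA.spectralSum x f ≤ hB.spectralSum x g := by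
  have hform : ∀ x, star x ⬝ᵥ (matFun g B - matFun f A) *ᵥ x
      = ((hB.spectralSum x g - hA.spectralSum x f : ℝ) : ℂ) := fun x => by
    rw [sub_mulVec, dotProduct_sub, hA.dotProduct_matFun_mulVec, hB.dotProduct_matFun_mulVec,
      Complex.ofReal_sub]
  refine ⟨fun h x => ?_, fun h => .of_dotProduct_mulVec_nonneg
    ((isHermitian_matFun g B).sub (isHermitian_matFun f A)) fun x => ?_⟩
  · simpa [hform] using h.dotProduct_mulVec_nonneg x
  · simpa [hform] using h x

variable {μ : Measure ℝ} {F : ℝ → ℝ → ℝ}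

lemma PosDef.integrable_spectralSum (hA : A.PosDef) (x : n → ℂ)
    (hF : ∀ t, 0 < t → Integrable (F t) μ) :
    Integrable (fun l => hA.1.spectralSum x (F · l)) μ :=
  integrable_finsetSum _ fun i _ => (hF _ (hA.eigenvalues_pos i)).const_mul _

lemma PosDef.spectralSum_integral (hA : A.PosDef) (x : n → ℂ)
    (hF : ∀ t, 0 < t → Integrable (F t) μ) :
    hA.1.spectralSum x (fun t => ∫ l, F t l ∂μ) = ∫ l, hA.1.spectralSum x (F · l) ∂μ := by
  simp only [IsHermitian.spectralSum]
  rw [integral_finsetSum _ fun i _ => (hF _ (hA.eigenvalues_pos i)).const_mul _]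
  simp only [integral_const_mul]

lemma PosDef.spectralSum_eq_integral (hA : A.PosDef) (x : n → ℂ) {g : ℝ → ℝ} {β : ℝ}
    (hF : ∀ t, 0 < t → Integrable (F t) μ) (hg : ∀ t, 0 < t → g t = β * t + ∫ l, F t l ∂μ) :
    hA.1.spectralSum x g = β * hA.1.spectralSum x id + ∫ l, hA.1.spectralSum x (F · l) ∂μ := by
  rw [← hA.spectralSum_integral x hF]
  simp only [IsHermitian.spectralSum, hg _ (hA.eigenvalues_pos _), Finset.mul_sum,
    ← Finset.sum_add_distrib, id]
  exact Finset.sum_congr rfl fun i _ => by ring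

end Matrix

theorem operatorMonotone_of_integral {g a w : ℝ → ℝ} {μ : Measure ℝ} {β : ℝ} (hβ : 0 ≤ β)
    (hμ : ∀ᵐ l ∂μ, 0 ≤ l) (hw : ∀ᵐ l ∂μ, 0 ≤ w l)
    (hint : ∀ t, 0 < t → Integrable (fun l => a l - w l / (t + l)) μ)
    (hg : ∀ t, 0 < t → g t = β * t + ∫ l, (a l - w l / (t + l)) ∂μ) :
    OperatorMonotone g := by
  intro k A B hA hB hAB
  rw [posSemidef_matFun_sub_matFun_iff hA.1 hB.1]
  intro x
  have hid : hA.1.spectralSum x id ≤ hB.1.spectralSum x id :=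
    (posSemidef_matFun_sub_matFun_iff hA.1 hB.1 id id).1
      (by rwa [hA.1.matFun_id, hB.1.matFun_id]) x
  have hone : hA.1.spectralSum x 1 = hB.1.spectralSum x 1 := by
    apply Complex.ofReal_injective
    rw [← hA.1.dotProduct_matFun_mulVec, ← hB.1.dotProduct_matFun_mulVec, hA.1.matFun_one,
      hB.1.matFun_one]
  have hres : ∀ l, 0 ≤ l → hB.1.spectralSum x (fun t => (t + l)⁻¹)
      ≤ hA.1.spectralSum x (fun t => (t + l)⁻¹) := fun l hl =>
    (posSemidef_matFun_sub_matFun_iff hB.1 hA.1 _ _).1 (by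
      rw [hA.matFun_inv_add hl, hB.matFun_inv_add hl]
      refine (hA.add_smul_one hl).posSemidef_inv_sub_inv (hB.add_smul_one hl) ?_
      rwa [add_sub_add_right_eq_sub]) x
  rw [hA.spectralSum_eq_integral x hint hg, hB.spectralSum_eq_integral x hint hg, ← sub_nonneg,
    add_sub_add_comm, ← mul_sub, ← integral_sub (hB.integrable_spectralSum x hint)
      (hA.integrable_spectralSum x hint)]
  refine add_nonneg (mul_nonneg hβ (sub_nonneg.2 hid)) (integral_nonneg_of_ae ?_)
  filter_upwards [hμ, hw] with l hl hwl
  rw [Pi.zero_apply, hA.1.spectralSum_sub_div, hB.1.spectralSum_sub_div, hone]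
  nlinarith [mul_nonneg hwl (sub_nonneg.2 (hres l hl))]

lemma integral_Ioi_rpow_div_one_add_pow_symm (a : ℝ) (k : ℕ) :
    ∫ l in Ioi (0 : ℝ), l ^ a / (1 + l) ^ k
      = ∫ l in Ioi (0 : ℝ), l ^ ((k : ℝ) - 2 - a) / (1 + l) ^ k := by
  rw [← integral_comp_rpow_Ioi (fun l => l ^ a / (1 + l) ^ k) (p := -1) (by norm_num)]
  refine setIntegral_congr_fun measurableSet_Ioi fun l (hl : 0 < l) => ?_
  have h1l : 1 + l⁻¹ = l⁻¹ * (1 + l) := by field_simp; ring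
  rw [smul_eq_mul, abs_neg, abs_one, rpow_neg_one, h1l, mul_pow, ← rpow_natCast l⁻¹,
    inv_rpow hl.le, inv_rpow hl.le, show (-1 - 1 : ℝ) = -2 by norm_num, rpow_sub hl, rpow_sub hl,
    rpow_neg hl.le]
  field_simp

noncomputable def wydWeight (s l : ℝ) : ℝ := (l ^ (s + 1) + l ^ (-s)) / (1 + l)

section Representation

variable {p s t l : ℝ}

lemma integral_rpowIntegrand₀₁_one_eq_rpow_div (hp : p ∈ Ioo 0 1) :
    ∫ l in Ioi 0, rpowIntegrand₀₁ p l 1 = ∫ l in Ioi (0 : ℝ), l ^ (p - 1) / (1 + l) ^ 1 :=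
  setIntegral_congr_fun measurableSet_Ioi fun l (hl : 0 < l) => by
    rw [rpowIntegrand₀₁_eq_pow_div hp hl.le zero_le_one, pow_one, mul_one, add_comm]

lemma integral_rpowIntegrand₀₁_one_symm (hs : s ∈ Ioo 0 1) :
    ∫ l in Ioi 0, rpowIntegrand₀₁ (1 - s) l 1 = ∫ l in Ioi 0, rpowIntegrand₀₁ s l 1 := by
  have hs' : 1 - s ∈ Ioo 0 1 := ⟨by linarith [hs.2], by linarith [hs.1]⟩
  rw [integral_rpowIntegrand₀₁_one_eq_rpow_div hs', integral_rpowIntegrand₀₁_one_eq_rpow_div hs,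
    integral_Ioi_rpow_div_one_add_pow_symm]
  congr 3 with l
  push_cast
  ring_nf

lemma integrableOn_rpow_div_one_add_sq (hp : p ∈ Ioo 0 1) :
    IntegrableOn (fun l : ℝ => l ^ p / (1 + l) ^ 2) (Ioi 0) := by
  refine (integrableOn_rpowIntegrand₀₁_Ioi hp zero_le_one).mono'
    (by fun_prop : Measurable _).aestronglyMeasurable ?_
  filter_upwards [ae_restrict_mem measurableSet_Ioi] with l (hl : 0 < l)
  rw [rpowIntegrand₀₁_eq_pow_div hp hl.le zero_le_one, norm_of_nonneg (by positivity)]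
  calc l ^ p / (1 + l) ^ 2 = l ^ (p - 1) * 1 / (l + 1) * (l / (1 + l)) := by
        rw [rpow_sub_one hl.ne']
        field_simp
        ring
    _ ≤ l ^ (p - 1) * 1 / (l + 1) :=
        mul_le_of_le_one_right (by positivity) ((div_le_one (by positivity)).2 (by linarith))

lemma integrableOn_rpow_neg_div_one_add_sq (hp : p ∈ Ioo 0 1) :
    IntegrableOn (fun l : ℝ => l ^ (-p) / (1 + l) ^ 2) (Ioi 0) := by
  have hp' : 1 - p ∈ Ioo 0 1 := ⟨by linarith [hp.2], by linarith [hp.1]⟩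
  refine (integrableOn_rpowIntegrand₀₁_Ioi hp' zero_le_one).mono'
    (by fun_prop : Measurable _).aestronglyMeasurable ?_
  filter_upwards [ae_restrict_mem measurableSet_Ioi] with l (hl : 0 < l)
  rw [rpowIntegrand₀₁_eq_pow_div hp' hl.le zero_le_one, norm_of_nonneg (by positivity), mul_one,
    add_comm l, show 1 - p - 1 = -p by ring]
  gcongr
  exact le_self_pow₀ (by linarith) two_ne_zero

lemma rpow_sub_wydWeight_div_one_add (hs : s ∈ Ioo 0 1) (hl : 0 < l) :
    l ^ (s - 1) - wydWeight s l / (1 + l)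
      = rpowIntegrand₀₁ s l 1 + l ^ s / (1 + l) ^ 2 - l ^ (-s) / (1 + l) ^ 2 := by
  rw [rpowIntegrand₀₁_eq_pow_div hs hl.le zero_le_one, wydWeight, rpow_sub_one hl.ne',
    rpow_add hl, rpow_one, rpow_neg hl.le]
  field_simp
  ring

lemma rpow_sub_wydWeight_div (hs : s ∈ Ioo 0 1) (hl : 0 < l) (ht : 0 < t) (ht1 : t ≠ 1) :
    l ^ (s - 1) - wydWeight s l / (t + l)
      = (t - 1)⁻¹ * (t * rpowIntegrand₀₁ s l t - rpowIntegrand₀₁ s l 1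
        + rpowIntegrand₀₁ (1 - s) l t / t - rpowIntegrand₀₁ (1 - s) l 1) := by
  rw [eq_inv_mul_iff_mul_eq₀ (sub_ne_zero.2 ht1)]
  have hs' : 1 - s ∈ Ioo 0 1 := ⟨by linarith [hs.2], by linarith [hs.1]⟩
  simp only [rpowIntegrand₀₁_eq_pow_div hs hl.le ht.le,
    rpowIntegrand₀₁_eq_pow_div hs hl.le zero_le_one, rpowIntegrand₀₁_eq_pow_div hs' hl.le ht.le,
    rpowIntegrand₀₁_eq_pow_div hs' hl.le zero_le_one, wydWeight, show 1 - s - 1 = -s by ring,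
    rpow_sub_one hl.ne', rpow_add hl, rpow_one, rpow_neg hl.le]
  field_simp
  ring

lemma integrableOn_rpow_sub_wydWeight_div (hs : s ∈ Ioo 0 1) (ht : 0 < t) :
    IntegrableOn (fun l => l ^ (s - 1) - wydWeight s l / (t + l)) (Ioi 0) := by
  have hs' : 1 - s ∈ Ioo 0 1 := ⟨by linarith [hs.2], by linarith [hs.1]⟩
  rcases eq_or_ne t 1 with rfl | ht1
  · refine IntegrableOn.congr_fun ?_
      (fun l (hl : 0 < l) => (rpow_sub_wydWeight_div_one_add hs hl).symm) measurableSet_Ioi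
    exact ((integrableOn_rpowIntegrand₀₁_Ioi hs zero_le_one).add
      (integrableOn_rpow_div_one_add_sq hs)).sub (integrableOn_rpow_neg_div_one_add_sq hs)
  · refine IntegrableOn.congr_fun ?_
      (fun l (hl : 0 < l) => (rpow_sub_wydWeight_div hs hl ht ht1).symm) measurableSet_Ioi
    exact (((((integrableOn_rpowIntegrand₀₁_Ioi hs ht.le).const_mul t).sub
      (integrableOn_rpowIntegrand₀₁_Ioi hs zero_le_one)).add
      ((integrableOn_rpowIntegrand₀₁_Ioi hs' ht.le).div_const t)).sub
      (integrableOn_rpowIntegrand₀₁_Ioi hs' zero_le_one)).const_mul (t - 1)⁻¹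

theorem integral_rpow_sub_wydWeight_div (hs : s ∈ Ioo 0 1) (ht : 0 < t) :
    ∫ l in Ioi 0, (l ^ (s - 1) - wydWeight s l / (t + l))
      = (∫ l in Ioi 0, rpowIntegrand₀₁ s l 1) * gWYD (1 + s) t := by
  have hs' : 1 - s ∈ Ioo 0 1 := ⟨by linarith [hs.2], by linarith [hs.1]⟩
  have hρ := integrableOn_rpowIntegrand₀₁_Ioi hs zero_le_one
  rcases eq_or_ne t 1 with rfl | ht1
  · rw [setIntegral_congr_fun measurableSet_Ioi fun l (hl : 0 < l) =>
        rpow_sub_wydWeight_div_one_add hs hl,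
      integral_sub (hρ.fun_add (integrableOn_rpow_div_one_add_sq hs))
        (integrableOn_rpow_neg_div_one_add_sq hs),
      integral_add hρ (integrableOn_rpow_div_one_add_sq hs),
      integral_Ioi_rpow_div_one_add_pow_symm s 2, gWYD, if_pos rfl]
    norm_num
  · have hρt := integrableOn_rpowIntegrand₀₁_Ioi hs ht.le
    have hρ' := integrableOn_rpowIntegrand₀₁_Ioi hs' zero_le_one
    have hρt' := integrableOn_rpowIntegrand₀₁_Ioi hs' ht.le
    rw [setIntegral_congr_fun measurableSet_Ioi fun l (hl : 0 < l) =>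
        rpow_sub_wydWeight_div hs hl ht ht1,
      integral_const_mul,
      integral_sub ((Integrable.sub' (hρt.const_mul t) hρ).fun_add (hρt'.div_const t)) hρ',
      integral_add (Integrable.sub' (hρt.const_mul t) hρ) (hρt'.div_const t),
      integral_sub (hρt.const_mul t) hρ, integral_const_mul, integral_div,
      integral_rpowIntegrand₀₁_eq_rpow_mul_const hs ht.le,
      integral_rpowIntegrand₀₁_eq_rpow_mul_const hs' ht.le, integral_rpowIntegrand₀₁_one_symm hs,
      gWYD, if_neg ht1, show 1 - (1 + s) = -s by ring, rpow_add ht, rpow_one, rpow_sub ht,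
      rpow_one, rpow_neg ht.le]
    field_simp
    ring

lemma gWYD_two (ht : 0 < t) : gWYD 2 t = t + (1 - 1 / t) := by
  rcases eq_or_ne t 1 with rfl | ht1
  · norm_num [gWYD]
  rw [gWYD, if_neg ht1, rpow_two, show (1 : ℝ) - 2 = -1 by norm_num, rpow_neg_one]
  field_simp [sub_ne_zero.2 ht1]
  ring

end Representation

/-- For `1 < p ≤ 2` the function `g_p` is operator monotone on `(0,∞)`. -/
theorem gWYD_operatorMonotone (p : ℝ) (hp1 : 1 < p) (hp2 : p ≤ 2) :
    OperatorMonotone (gWYD p) := by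
  rcases hp2.lt_or_eq with hp2 | rfl
  · obtain ⟨s, hs, rfl⟩ : ∃ s ∈ Ioo (0 : ℝ) 1, p = 1 + s :=
      ⟨p - 1, ⟨by linarith, by linarith⟩, by ring⟩
    have hC := integral_rpowIntegrand₀₁_one_pos hs
    refine operatorMonotone_of_integral (μ := volume.restrict (Ioi 0)) (β := 0)
      (a := fun l => (∫ u in Ioi 0, rpowIntegrand₀₁ s u 1)⁻¹ * l ^ (s - 1))
      (w := fun l => (∫ u in Ioi 0, rpowIntegrand₀₁ s u 1)⁻¹ * wydWeight s l) le_rfl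
      (ae_restrict_of_forall_mem measurableSet_Ioi fun l hl => le_of_lt hl)
      (ae_restrict_of_forall_mem measurableSet_Ioi fun l (hl : 0 < l) => by
        unfold wydWeight; positivity) (fun t ht => ?_) (fun t ht => ?_)
    · simpa only [mul_div_assoc, ← mul_sub] using
        (integrableOn_rpow_sub_wydWeight_div hs ht).const_mul _
    · simp_rw [mul_div_assoc, ← mul_sub, integral_const_mul, integral_rpow_sub_wydWeight_div hs ht,
        zero_mul, zero_add, inv_mul_cancel_left₀ hC.ne']
  · refine operatorMonotone_of_integral (μ := Measure.dirac 0) (β := 1) (a := fun _ => 1)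
      (w := fun _ => 1) zero_le_one (by simp [ae_dirac_eq]) (by simp [ae_dirac_eq])
      (fun t ht => integrable_dirac (by simp)) (fun t ht => ?_)
    rw [gWYD_two ht, integral_dirac, add_zero, one_mul]
end
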